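/- In the normalized setting below, suppose |s| ≤ 3δ/4 and ξ ∈ Ω. Then s − s_cr(ξ) = ⟨γ'(s),ξ⟩ / ⟨γ''(s),ξ⟩ + E₁ with |E₁| ≤ 6M (s − s_cr(ξ))². Moreover, if s^μ ∈ [−δ,δ], a^μ ∈ 𝔖_k(r₀, s^μ) with r₀ ≤ min{10^{−3}M^{−2}, δ/4}, and (ξ,τ) ∈ supp(a^μ), then U_μ(ξ,τ) = τ + ⟨γ(s_cr(ξ)),ξ⟩ + E₂ with |E₂| ≤ 13M |s_cr(ξ) − s^μ|³ |ξ|, where U_μ(ξ,τ) = τ + ⟨γ(s^μ),ξ⟩ − (1/2)⟨γ'(s^μ),ξ⟩² / ⟨γ''(s^μ),ξ⟩. -/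

import Mathlib

noncomputable section
open MeasureTheory Real Complex
open scoped RealInnerProductSpace ENNReal NNReal

/-- Euclidean space `ℝⁿ`. -/
abbrev E (n : ℕ) : Type := EuclideanSpace ℝ (Fin n)

/-- The vector `(x, y, z) ∈ ℝ³`. -/
def vec3 (x y z : ℝ) : E 3 := (WithLp.equiv 2 (Fin 3 → ℝ)).symm ![x, y, z]

/-- Cross product in `ℝ³`. -/
def cross3 (a b : E 3) : E 3 :=
  vec3 (a 1 * b 2 - a 2 * b 1) (a 2 * b 0 - a 0 * b 2) (a 0 * b 1 - a 1 * b 0)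

/-- `L^p` (quasi-)norm, `0 < p < ∞` entered as a real number. -/
def eLp {V F : Type*} [MeasureSpace V] [NormedAddCommGroup F] (f : V → F) (p : ℝ) : ℝ≥0∞ :=
  eLpNorm f (ENNReal.ofReal p) volume

/-- The operator given on the Fourier side by multiplication with `m`. -/
def mOp {n : ℕ} (m : E n → ℂ) (f : E n → ℂ) : E n → ℂ :=
  FourierTransformInv.fourierInv (fun ξ => m ξ * FourierTransform.fourier f ξ)

/-- `C` is a bound for the `L^p → L^p` operator norm of the Fourier multiplier operator
associated to `m` (tested on Schwartz functions). -/
def IsMultiplierBound {n : ℕ} (m : E n → ℂ) (p : ℝ≥0∞) (C : ℝ) : Prop :=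
  ∀ f : SchwartzMap (E n) ℂ,
    eLpNorm (mOp m ⇑f) p volume ≤ ENNReal.ofReal C * eLpNorm (⇑f) p volume

/-- The `M^p` multiplier norm. -/
def multiplierNorm {n : ℕ} (m : E n → ℂ) (p : ℝ≥0∞) : ℝ :=
  sInf {C : ℝ | 0 ≤ C ∧ IsMultiplierBound m p C}

/-- The Bessel potential (Sobolev) `L^p_α` norm. -/
def sobolevNorm {n : ℕ} (f : E n → ℂ) (p α : ℝ) : ℝ≥0∞ :=
  eLp (FourierTransformInv.fourierInv
    (fun ξ => ((((1 + ‖ξ‖ ^ 2) ^ (α / 2) : ℝ)) : ℂ) * FourierTransform.fourier f ξ)) p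

section Plates

/-- `u₁(α) = (g(α), 1)`. -/
def uOne (g : ℝ → ℝ × ℝ) (α : ℝ) : E 3 := vec3 (g α).1 (g α).2 1

/-- `u₂(α) = (g'(α), 0)`; the derivative is supplied as the function `g'`. -/
def uTwo (g' : ℝ → ℝ × ℝ) (α : ℝ) : E 3 := vec3 (g' α).1 (g' α).2 0

/-- `u₃ = u₁ × u₂`. -/
def uThree (g g' : ℝ → ℝ × ℝ) (α : ℝ) : E 3 := cross3 (uOne g α) (uTwo g' α)

/-- The `(δ, λ)`-plate at `α` associated to the planar curve `g` (with derivative `g'`). -/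
def plateSet (g g' : ℝ → ℝ × ℝ) (δ lam α : ℝ) : Set (E 3) :=
  {ξ | lam / 2 ≤ |⟪uOne g α, ξ⟫| ∧ |⟪uOne g α, ξ⟫| ≤ 2 * lam ∧
       |⟪uTwo g' α, ξ - ξ 2 • uOne g α⟫| ≤ lam * δ ^ ((1:ℝ)/2) ∧
       |⟪uThree g g' α, ξ⟫| ≤ lam * δ}

/-- An admissible bump function associated to the plate `R^α_{δ,λ}`. -/
def IsAdmissibleBump (g g' : ℝ → ℝ × ℝ) (δ lam α : ℝ) (φ : E 3 → ℂ) : Prop :=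
  ContDiff ℝ (⊤ : ℕ∞) φ ∧ tsupport φ ⊆ plateSet g g' δ lam α ∧
  ∀ n₁ n₂ n₃ : ℕ, n₁ + n₂ + n₃ ≤ 4 → ∀ ξ : E 3,
    ‖iteratedFDeriv ℝ (n₁ + n₂ + n₃) φ ξ
        (fun i => if (i : ℕ) < n₁ then uOne g α
          else if (i : ℕ) < n₁ + n₂ then uTwo g' α else uThree g g' α)‖
      ≤ lam ^ (-(n₁ + n₂ + n₃ : ℝ)) * δ ^ (-(n₂ : ℝ) / 2) * δ ^ (-(n₃ : ℝ))

/-- A `(δ, λ, θ)`-plate family with separation `sep`: the angular parameters `αs` lie in `I`,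
are `sep`-separated and spread over an interval of length at most `θ`. -/
def IsPlateFamily (I : Set ℝ) (θ sep : ℝ) {N : ℕ} (αs : Fin N → ℝ) : Prop :=
  (∀ i, αs i ∈ I) ∧ (∀ i j, i ≠ j → sep ≤ |αs i - αs j|) ∧ ∀ i j, |αs i - αs j| ≤ θ

/-- The unit circle and its derivative. -/
def circleG (α : ℝ) : ℝ × ℝ := (Real.cos (2 * π * α), Real.sin (2 * π * α))

def circleG' (α : ℝ) : ℝ × ℝ := (-(2 * π) * Real.sin (2 * π * α), 2 * π * Real.cos (2 * π * α))

/-- Wolff's plate decomposition inequality at exponent `p`, for the light cone. -/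
def WolffEstimateHolds (p : ℝ) : Prop :=
  ∀ ε > 0, ∃ A > 0, ∀ δ lam : ℝ, 0 < δ → δ ≤ 1 → 1 ≤ lam →
    ∀ (N : ℕ) (αs : Fin N → ℝ) (φ : Fin N → E 3 → ℂ) (f : Fin N → SchwartzMap (E 3) ℂ),
      IsPlateFamily (Set.Icc (-(1/2) : ℝ) (1/2)) 1 (δ ^ ((1:ℝ)/2)) αs →
      (∀ i, IsAdmissibleBump circleG circleG' δ lam (αs i) (φ i)) →
      eLp (fun x => ∑ i, mOp (φ i) (⇑(f i)) x) p
        ≤ ENNReal.ofReal (A * δ ^ (2/p - 1/2 - ε)) *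
            (∑ i, eLp (⇑(f i)) p ^ p) ^ (1/p)

/-- The Wolff exponent `p_W`. -/
def wolffExponent : ℝ := sInf {p₀ : ℝ | ∀ p, p₀ < p → WolffEstimateHolds p}

end Plates

section Curves

/-- The type condition of order `m` at the point `s` of a curve: for every unit `ξ`,
some derivative `γ^{(j)}(s)`, `1 ≤ j ≤ m`, is non-orthogonal to `ξ`. -/
def TypeCondAt (γ : ℝ → E 3) (I : Set ℝ) (s : ℝ) (m : ℕ) : Prop :=
  ∀ ξ : E 3, ‖ξ‖ = 1 → 0 < ∑ j ∈ Finset.Icc 1 m, |⟪iteratedDerivWithin j γ I s, ξ⟫|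

/-- `γ` is of finite type (with order `n`) on `I`:
`∑_{j=1}^n |⟨γ^{(j)}(s), ξ⟩| ≥ c` for all `s ∈ I` and all unit vectors `ξ`. -/
def IsFiniteTypeOfOrder (γ : ℝ → E 3) (I : Set ℝ) (n : ℕ) : Prop :=
  ∃ c > 0, ∀ s ∈ I, ∀ ξ : E 3, ‖ξ‖ = 1 →
    c ≤ ∑ j ∈ Finset.Icc 1 n, |⟪iteratedDerivWithin j γ I s, ξ⟫|

/-- `γ` has maximal type `n` on `I`: the finite type condition holds at order `n`
(uniformly), and `n` is the supremum over `s ∈ I` of the types at `s`. -/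
def IsMaximalType (γ : ℝ → E 3) (I : Set ℝ) (n : ℕ) : Prop :=
  IsFiniteTypeOfOrder γ I n ∧ ∀ m, m < n → ∃ s ∈ I, ¬ TypeCondAt γ I s m

/-- The averaging operator `𝒜_t f (x) = ∫ f(x - tγ(s)) χ(s) ds`. -/
def avgOp (γ : ℝ → E 3) (χ : ℝ → ℝ) (t : ℝ) (f : E 3 → ℂ) (x : E 3) : ℂ :=
  ∫ s : ℝ, f (x - t • γ s) * (χ s : ℂ)

/-- Determinant of three vectors in `ℝ³`. -/
def det3 (v₁ v₂ v₃ : E 3) : ℝ :=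
  v₁ 0 * (v₂ 1 * v₃ 2 - v₂ 2 * v₃ 1) - v₁ 1 * (v₂ 0 * v₃ 2 - v₂ 2 * v₃ 0)
    + v₁ 2 * (v₂ 0 * v₃ 1 - v₂ 1 * v₃ 0)

end Curves

section HigherDim

/-- Classical Fourier transform `f̂(ξ) = ∫ e^{-i⟨x,ξ⟩} f(x) dx`. -/
def FTc {n : ℕ} (f : E n → ℂ) (ξ : E n) : ℂ :=
  ∫ x : E n, Complex.exp (-(Complex.I) * ((⟪x, ξ⟫ : ℝ) : ℂ)) * f x

/-- `𝔄_Γ[a, f](x,t) = (2π)^{-d} ∬ a(u,t,ξ) e^{i⟨x,ξ⟩ - it⟨Γ(u),ξ⟩} f̂(ξ) du dξ`. -/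
def AGamma {n : ℕ} (Γ : ℝ → E n) (a : ℝ → ℝ → E n → ℂ) (f : E n → ℂ) : E n × ℝ → ℂ :=
  fun z => (((2 * π) ^ (-(n : ℝ)) : ℝ) : ℂ) *
    ∫ ξ : E n, (∫ u : ℝ, a u z.2 ξ *
        Complex.exp (Complex.I * (((⟪z.1, ξ⟫ - z.2 * ⟪Γ u, ξ⟫ : ℝ)) : ℂ))) * FTc f ξ

/-- Subtracting the component along the unit vector `w`:
the orthogonal projection onto `(ℝ w)^⊥`. -/
def projPerp {n : ℕ} (w v : E n) : E n := v - ⟪v, w⟫ • w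

/-- The map `L_{r,s} = L^{(1)}_s ∘ L^{(2)}_{r,s}` on `ℝ^{d+1}`, where `L^{(2)}_{r,s}` dilates
by `r²` in the direction `e_{d+1}`, by `r` in the direction `(γ'(s),0)` and fixes the
orthogonal complement, and `L^{(1)}_s (ξ,τ) = (ξ, τ - ⟨γ(s),ξ⟩)` is the shear. -/
def Lmap {n : ℕ} (γ : ℝ → E n) (r s : ℝ) (Ξ : E n × ℝ) : E n × ℝ :=
  (Ξ.1 + ((r - 1) * ⟪Ξ.1, deriv γ s⟫) • deriv γ s,
    r ^ 2 * Ξ.2 - ⟪γ s, Ξ.1 + ((r - 1) * ⟪Ξ.1, deriv γ s⟫) • deriv γ s⟫)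

/-- Euclidean norm of `Ξ = (ξ, τ) ∈ ℝ^{d+1}`. -/
def enormP {n : ℕ} (Ξ : E n × ℝ) : ℝ := Real.sqrt (‖Ξ.1‖ ^ 2 + Ξ.2 ^ 2)

/-- The standard coordinate directions of `ℝ^{d+1} = ℝ^d × ℝ`. -/
def stdDirs (n : ℕ) : Set (E n × ℝ) :=
  {w | (∃ i : Fin n, w = (EuclideanSpace.single i (1 : ℝ), 0)) ∨ w = (0, 1)}

/-- The multiplier class `𝒮_k(r,s)`: multipliers `m(ξ,τ)` supported in
`{2^{k-1} ≤ |ξ| ≤ 2^{k+1}, |⟨γ'(s),ξ⟩| ≤ 2^{k+3} r, |τ + ⟨γ(s),ξ⟩| ≤ 2^{k+4} r²}`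
with `|∂_Ξ^α (m(L_{r,s} Ξ))| ≤ |Ξ|^{-|α|}` for `|α| ≤ d+2`. -/
def SClass {n : ℕ} (γ : ℝ → E n) (k : ℕ) (r s : ℝ) (m : E n × ℝ → ℂ) : Prop :=
  (∀ Ξ : E n × ℝ, m Ξ ≠ 0 →
    (2:ℝ) ^ ((k:ℝ) - 1) ≤ ‖Ξ.1‖ ∧ ‖Ξ.1‖ ≤ (2:ℝ) ^ ((k:ℝ) + 1) ∧
    |⟪deriv γ s, Ξ.1⟫| ≤ (2:ℝ) ^ ((k:ℝ) + 3) * r ∧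
    |Ξ.2 + ⟪γ s, Ξ.1⟫| ≤ (2:ℝ) ^ ((k:ℝ) + 4) * r ^ 2) ∧
  (∀ N : ℕ, N ≤ n + 2 → ∀ v : Fin N → E n × ℝ, (∀ i, v i ∈ stdDirs n) →
    ∀ Ξ : E n × ℝ,
      ‖iteratedFDeriv ℝ N (fun Ξ' => m (Lmap γ r s Ξ')) Ξ v‖ ≤ enormP Ξ ^ (-(N : ℝ)))

/-- The symbol class `𝔖_k(r, s₀)`: symbols `a(s,t,ξ,τ)` supported in
`[s₀-2r, s₀+2r] × [1/2,2] × Ω_k × ℝ` with `∂_s^{i₁} ∂_t^{i₂} a(s,t,·) ∈ 𝒮_k(r,s₀)`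
for `i₁, i₂ ∈ {0,1}`. -/
def FSClass {n : ℕ} (γ : ℝ → E n) (Ω : Set (E n)) (k : ℕ) (r s₀ : ℝ)
    (a : ℝ → ℝ → E n × ℝ → ℂ) : Prop :=
  (∀ s t Ξ, a s t Ξ ≠ 0 → |s - s₀| ≤ 2 * r ∧ t ∈ Set.Icc (1/2 : ℝ) 2 ∧ Ξ.1 ∈ Ω ∧
    (2:ℝ) ^ ((k:ℝ) - 1) ≤ ‖Ξ.1‖ ∧ ‖Ξ.1‖ ≤ (2:ℝ) ^ ((k:ℝ) + 1)) ∧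
  (∀ i₁ i₂ : ℕ, i₁ ≤ 1 → i₂ ≤ 1 → ∀ s t : ℝ,
    SClass γ k r s₀ (fun Ξ => iteratedDeriv i₁ (fun s' => iteratedDeriv i₂
      (fun t' => a s' t' Ξ) t) s))

/-- `𝔪[a](ξ,τ) = ∬ e^{-it(τ + ⟨γ(s),ξ⟩)} a(s,t,ξ,τ) ds dt`. -/
def mfrak {n : ℕ} (γ : ℝ → E n) (a : ℝ → ℝ → E n × ℝ → ℂ) (Ξ : E n × ℝ) : ℂ :=
  ∫ s : ℝ, ∫ t : ℝ,
    Complex.exp (-(Complex.I) * ((t * (Ξ.2 + ⟪γ s, Ξ.1⟫) : ℝ) : ℂ)) * a s t Ξ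

/-- `𝒯[a,f](x,t) = (2π)^{-d-1} ∬ e^{i(⟨x,ξ⟩ + tτ)} 𝔪[a](ξ,τ) f̂(ξ) dξ dτ`. -/
def Tcal {n : ℕ} (γ : ℝ → E n) (a : ℝ → ℝ → E n × ℝ → ℂ) (f : E n → ℂ) : E n × ℝ → ℂ :=
  fun z => (((2 * π) ^ (-(n : ℝ) - 1) : ℝ) : ℂ) *
    ∫ Ξ : E n × ℝ, Complex.exp (Complex.I * ((⟪z.1, Ξ.1⟫ + z.2 * Ξ.2 : ℝ) : ℂ)) *
      mfrak γ a Ξ * FTc f Ξ.1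

/-- The kernel `K_s[m](x,t') = ∭ e^{i⟨x,ξ⟩ + it'τ} e^{-it(τ + ⟨γ(s),ξ⟩)} m(t,ξ,τ) dξ dτ dt`. -/
def Ksm {n : ℕ} (γ : ℝ → E n) (s : ℝ) (m : ℝ → E n × ℝ → ℂ) (x : E n) (t' : ℝ) : ℂ :=
  ∫ t in Set.Icc (1/2 : ℝ) 2, ∫ Ξ : E n × ℝ,
    Complex.exp (Complex.I * ((⟪x, Ξ.1⟫ + t' * Ξ.2 : ℝ) : ℂ)) *
      Complex.exp (-(Complex.I) * ((t * (Ξ.2 + ⟪γ s, Ξ.1⟫) : ℝ) : ℂ)) * m t Ξ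

end HigherDim

/-! Both estimates are Taylor expansions, at `s` resp. `s^μ`, of the `ξ`-components of `γ`, whose
remainders are controlled by `|⟨γ''', ξ⟩| ≤ M |ξ|`. For the first, expand `⟨γ', ξ⟩` to first
order and evaluate at `s_cr(ξ)`, where it vanishes; then divide by `|⟨γ''(s), ξ⟩| ≥ |ξ|/2`.
For the second, put `h = s_cr(ξ) - s^μ` and complete the square: `U_μ - τ - ⟨γ(s_cr(ξ)), ξ⟩`
is `-R₂ - R₁² / (2⟨γ''(s^μ), ξ⟩)`, with `R₁ = O(M|ξ|h²)`, `R₂ = O(M|ξ||h|³)` the Taylor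
remainders of `⟨γ', ξ⟩` and `⟨γ, ξ⟩`. The quadratic term is `O(M²|ξ||h|⁴)`, which is
`O(M|ξ||h|³)` because `M|h| ≤ 1`: by the mean value theorem `|ξ||h|/2 ≤ |⟨γ'(s^μ), ξ⟩|`, and
the support condition of `𝔖_k(r₀, s^μ)` bounds the latter by `16 r₀ |ξ|`. -/

section Taylor

variable {F : Type*} [NormedAddCommGroup F] [NormedSpace ℝ F] {a b C : ℝ}

theorem norm_taylor_remainder_one_le {f f' f'' : ℝ → F}
    (hf : ∀ t ∈ Set.uIcc a b, HasDerivAt f (f' t) t)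
    (hf' : ∀ t ∈ Set.uIcc a b, HasDerivAt f' (f'' t) t)
    (hC : ∀ t ∈ Set.uIcc a b, ‖f'' t‖ ≤ C) :
    ‖f b - f a - (b - a) • f' a‖ ≤ C * (b - a) ^ 2 := by
  have hC0 : 0 ≤ C := (norm_nonneg _).trans (hC a Set.left_mem_uIcc)
  have hf'_lip : ∀ t ∈ Set.uIcc a b, ‖f' t - f' a‖ ≤ C * |b - a| := fun t ht => calc
    ‖f' t - f' a‖ ≤ C * ‖t - a‖ :=
      (convex_uIcc a b).norm_image_sub_le_of_norm_hasDerivWithin_le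
        (fun x hx => (hf' x hx).hasDerivWithinAt) hC Set.left_mem_uIcc ht
    _ ≤ C * |b - a| := mul_le_mul_of_nonneg_left (Set.abs_sub_left_of_mem_uIcc ht) hC0
  have hg : ∀ t ∈ Set.uIcc a b, HasDerivAt (fun x => f x - x • f' a) (f' t - f' a) t :=
    fun t ht => by
      simpa only [one_smul] using (hf t ht).fun_sub ((hasDerivAt_id' t).smul_const (f' a))
  calc ‖f b - f a - (b - a) • f' a‖ = ‖(f b - b • f' a) - (f a - a • f' a)‖ := by
        congr 1; module
    _ ≤ C * |b - a| * ‖b - a‖ :=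
      (convex_uIcc a b).norm_image_sub_le_of_norm_hasDerivWithin_le
        (fun x hx => (hg x hx).hasDerivWithinAt) hf'_lip Set.left_mem_uIcc Set.right_mem_uIcc
    _ = C * (b - a) ^ 2 := by rw [Real.norm_eq_abs, mul_assoc, abs_mul_abs_self, sq]

theorem norm_taylor_remainder_two_le {f f' f'' f''' : ℝ → F}
    (hf : ∀ t ∈ Set.uIcc a b, HasDerivAt f (f' t) t)
    (hf' : ∀ t ∈ Set.uIcc a b, HasDerivAt f' (f'' t) t)
    (hf'' : ∀ t ∈ Set.uIcc a b, HasDerivAt f'' (f''' t) t)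
    (hC : ∀ t ∈ Set.uIcc a b, ‖f''' t‖ ≤ C) :
    ‖f b - f a - (b - a) • f' a - ((b - a) ^ 2 / 2) • f'' a‖ ≤ C * |b - a| ^ 3 := by
  have hC0 : 0 ≤ C := (norm_nonneg _).trans (hC a Set.left_mem_uIcc)
  have hsub : ∀ t ∈ Set.uIcc a b, Set.uIcc a t ⊆ Set.uIcc a b :=
    fun t ht => Set.uIcc_subset_uIcc Set.left_mem_uIcc ht
  have hg'_le : ∀ t ∈ Set.uIcc a b, ‖f' t - f' a - (t - a) • f'' a‖ ≤ C * (b - a) ^ 2 :=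
    fun t ht => calc
      ‖f' t - f' a - (t - a) • f'' a‖ ≤ C * (t - a) ^ 2 :=
        norm_taylor_remainder_one_le (fun x hx => hf' x (hsub t ht hx))
          (fun x hx => hf'' x (hsub t ht hx)) (fun x hx => hC x (hsub t ht hx))
      _ ≤ C * (b - a) ^ 2 := mul_le_mul_of_nonneg_left
          (sq_le_sq.2 (Set.abs_sub_left_of_mem_uIcc ht)) hC0
  have hg : ∀ t ∈ Set.uIcc a b,
      HasDerivAt (fun x => f x - (x - a) • f' a - ((x - a) ^ 2 / 2) • f'' a)
      (f' t - f' a - (t - a) • f'' a) t := fun t ht => by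
    have hq : HasDerivAt (fun x : ℝ => (x - a) ^ 2 / 2) (t - a) t := by
      simpa using (((hasDerivAt_id' t).sub_const a).pow 2).div_const 2
    simpa only [one_smul] using ((hf t ht).fun_sub (((hasDerivAt_id' t).sub_const a).smul_const
      (f' a))).fun_sub (hq.smul_const (f'' a))
  calc ‖f b - f a - (b - a) • f' a - ((b - a) ^ 2 / 2) • f'' a‖
      = ‖(f b - (b - a) • f' a - ((b - a) ^ 2 / 2) • f'' a)
          - (f a - (a - a) • f' a - ((a - a) ^ 2 / 2) • f'' a)‖ := by
        congr 1; module
    _ ≤ C * (b - a) ^ 2 * ‖b - a‖ :=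
      (convex_uIcc a b).norm_image_sub_le_of_norm_hasDerivWithin_le
        (fun x hx => (hg x hx).hasDerivWithinAt) hg'_le Set.left_mem_uIcc Set.right_mem_uIcc
    _ = C * |b - a| ^ 3 := by rw [Real.norm_eq_abs, ← sq_abs]; ring

end Taylor

theorem mul_abs_sub_le_abs_sub_of_le_abs_deriv {g g' : ℝ → ℝ} {a b c : ℝ}
    (hg : ∀ t ∈ Set.uIcc a b, HasDerivAt g (g' t) t) (hc : ∀ t ∈ Set.uIcc a b, c ≤ |g' t|) :
    c * |b - a| ≤ |g b - g a| := by
  wlog hab : a < b generalizing a b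
  · rcases (not_lt.1 hab).lt_or_eq with hba | rfl
    · rw [abs_sub_comm b, abs_sub_comm (g b)]
      exact this (by rwa [Set.uIcc_comm]) (by rwa [Set.uIcc_comm]) hba
    · simp
  have hIoo : Set.Ioo a b ⊆ Set.uIcc a b := Set.Ioo_subset_Icc_self.trans Set.Icc_subset_uIcc
  obtain ⟨x, hx, hslope⟩ := exists_hasDerivAt_eq_slope g g' hab
    (fun t ht => (hg t (Set.Icc_subset_uIcc ht)).continuousAt.continuousWithinAt)
    (fun t ht => hg t (hIoo ht))
  have hba : 0 < b - a := sub_pos.2 hab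
  calc c * |b - a| ≤ |g' x| * (b - a) := by
        rw [abs_of_pos hba]; exact mul_le_mul_of_nonneg_right (hc x (hIoo hx)) hba.le
    _ = |g b - g a| := by rw [hslope, abs_div, abs_of_pos hba, div_mul_cancel₀ _ hba.ne']

theorem abs_sub_half_sq_div_sub_le {F₀ F₁ A B h K n : ℝ} (hn : 0 < n) (hA : n / 2 ≤ |A|)
    (hK : 0 ≤ K) (hKh : K * |h| ≤ 1) (hB : |B + h * A| ≤ K * n * h ^ 2)
    (hF : |F₁ - F₀ - h * B - h ^ 2 / 2 * A| ≤ K * n * |h| ^ 3) :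
    |(F₀ - 1 / 2 * B ^ 2 / A) - F₁| ≤ 2 * K * n * |h| ^ 3 := by
  have hA0 : A ≠ 0 := abs_pos.1 (by linarith)
  have hsquare : (F₀ - 1 / 2 * B ^ 2 / A) - F₁
      = -(F₁ - F₀ - h * B - h ^ 2 / 2 * A) - (B + h * A) ^ 2 / (2 * A) := by
    field_simp
    ring
  have hquot : |(B + h * A) ^ 2 / (2 * A)| ≤ K * n * |h| ^ 3 := calc
    |(B + h * A) ^ 2 / (2 * A)| = |B + h * A| ^ 2 / (2 * |A|) := by
      rw [abs_div, abs_mul, abs_two, abs_pow]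
    _ ≤ (K * n * h ^ 2) ^ 2 / n :=
      div_le_div₀ (by positivity) (pow_le_pow_left₀ (abs_nonneg _) hB 2) hn (by linarith)
    _ = K * n * |h| ^ 3 * (K * |h|) := by rw [← sq_abs h]; field_simp
    _ ≤ K * n * |h| ^ 3 := mul_le_of_le_one_right (by positivity) hKh
  rw [hsquare]
  linarith [abs_sub (-(F₁ - F₀ - h * B - h ^ 2 / 2 * A)) ((B + h * A) ^ 2 / (2 * A)),
    abs_neg (F₁ - F₀ - h * B - h ^ 2 / 2 * A)]

theorem ContDiff.hasDerivAt_iteratedDeriv {F : Type*} [NormedAddCommGroup F] [NormedSpace ℝ F]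
    {f : ℝ → F} {n : WithTop ℕ∞} (hf : ContDiff ℝ n f) {m : ℕ} (hm : m < n) (t : ℝ) :
    HasDerivAt (iteratedDeriv m f) (iteratedDeriv (m + 1) f t) t := by
  rw [iteratedDeriv_succ]
  exact (hf.differentiable_iteratedDeriv m hm t).hasDerivAt

section Curve

variable {F : Type*} [NormedAddCommGroup F] [InnerProductSpace ℝ F] {γ : ℝ → F} {a b M : ℝ}
  {ξ : F}

theorem abs_inner_taylor_remainder_one_le (hγ : ContDiff ℝ 3 γ)
    (hM : ∀ t ∈ Set.uIcc a b, ‖iteratedDeriv 3 γ t‖ ≤ M) :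
    |⟪deriv γ b, ξ⟫ - ⟪deriv γ a, ξ⟫ - (b - a) * ⟪iteratedDeriv 2 γ a, ξ⟫|
      ≤ M * ‖ξ‖ * (b - a) ^ 2 := by
  have hγ' := hγ.hasDerivAt_iteratedDeriv (m := 1) (by norm_num)
  rw [iteratedDeriv_one] at hγ'
  calc |⟪deriv γ b, ξ⟫ - ⟪deriv γ a, ξ⟫ - (b - a) * ⟪iteratedDeriv 2 γ a, ξ⟫|
      = |⟪deriv γ b - deriv γ a - (b - a) • iteratedDeriv 2 γ a, ξ⟫| := by
        rw [inner_sub_left, inner_sub_left, real_inner_smul_left]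
    _ ≤ ‖deriv γ b - deriv γ a - (b - a) • iteratedDeriv 2 γ a‖ * ‖ξ‖ :=
      abs_real_inner_le_norm _ _
    _ ≤ M * (b - a) ^ 2 * ‖ξ‖ := mul_le_mul_of_nonneg_right
        (norm_taylor_remainder_one_le (fun t _ => hγ' t)
          (fun t _ => hγ.hasDerivAt_iteratedDeriv (m := 2) (by norm_num) t) hM) (norm_nonneg _)
    _ = M * ‖ξ‖ * (b - a) ^ 2 := by ring

theorem abs_inner_taylor_remainder_two_le (hγ : ContDiff ℝ 3 γ)
    (hM : ∀ t ∈ Set.uIcc a b, ‖iteratedDeriv 3 γ t‖ ≤ M) :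
    |⟪γ b, ξ⟫ - ⟪γ a, ξ⟫ - (b - a) * ⟪deriv γ a, ξ⟫ - (b - a) ^ 2 / 2 * ⟪iteratedDeriv 2 γ a, ξ⟫|
      ≤ M * ‖ξ‖ * |b - a| ^ 3 := by
  have hγ₀ := hγ.hasDerivAt_iteratedDeriv (m := 0) (by norm_num)
  have hγ₁ := hγ.hasDerivAt_iteratedDeriv (m := 1) (by norm_num)
  simp only [iteratedDeriv_zero, zero_add, iteratedDeriv_one] at hγ₀ hγ₁
  calc |⟪γ b, ξ⟫ - ⟪γ a, ξ⟫ - (b - a) * ⟪deriv γ a, ξ⟫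
        - (b - a) ^ 2 / 2 * ⟪iteratedDeriv 2 γ a, ξ⟫|
      = |⟪γ b - γ a - (b - a) • deriv γ a - ((b - a) ^ 2 / 2) • iteratedDeriv 2 γ a, ξ⟫| := by
        rw [inner_sub_left, inner_sub_left, inner_sub_left, real_inner_smul_left,
          real_inner_smul_left]
    _ ≤ ‖γ b - γ a - (b - a) • deriv γ a - ((b - a) ^ 2 / 2) • iteratedDeriv 2 γ a‖ * ‖ξ‖ :=
      abs_real_inner_le_norm _ _
    _ ≤ M * |b - a| ^ 3 * ‖ξ‖ := mul_le_mul_of_nonneg_right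
        (norm_taylor_remainder_two_le (fun t _ => hγ₀ t) (fun t _ => hγ₁ t)
          (fun t _ => hγ.hasDerivAt_iteratedDeriv (m := 2) (by norm_num) t) hM) (norm_nonneg _)
    _ = M * ‖ξ‖ * |b - a| ^ 3 := by ring

theorem mul_abs_sub_le_abs_inner_deriv {c : ℝ} (hγ : ContDiff ℝ 2 γ)
    (hc : ∀ t ∈ Set.uIcc a b, c ≤ |⟪iteratedDeriv 2 γ t, ξ⟫|) (hb : ⟪deriv γ b, ξ⟫ = 0) :
    c * |b - a| ≤ |⟪deriv γ a, ξ⟫| := by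
  have hγ' := hγ.hasDerivAt_iteratedDeriv (m := 1) (by norm_num)
  rw [iteratedDeriv_one] at hγ'
  have hg : ∀ t ∈ Set.uIcc a b,
      HasDerivAt (fun u => ⟪deriv γ u, ξ⟫) ⟪iteratedDeriv 2 γ t, ξ⟫ t := fun t _ => by
    simpa using (hγ' t).inner ℝ (hasDerivAt_const t ξ)
  simpa [hb] using mul_abs_sub_le_abs_sub_of_le_abs_deriv hg hc

theorem abs_sub_sub_inner_div_inner_le (hγ : ContDiff ℝ 3 γ)
    (hM : ∀ t ∈ Set.uIcc a b, ‖iteratedDeriv 3 γ t‖ ≤ M) (hξ : ξ ≠ 0)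
    (hA : ‖ξ‖ / 2 ≤ |⟪iteratedDeriv 2 γ a, ξ⟫|) (hb : ⟪deriv γ b, ξ⟫ = 0) :
    |(a - b) - ⟪deriv γ a, ξ⟫ / ⟪iteratedDeriv 2 γ a, ξ⟫| ≤ 2 * M * (a - b) ^ 2 := by
  have hξ' : 0 < ‖ξ‖ := norm_pos_iff.2 hξ
  have hA0 : 0 < |⟪iteratedDeriv 2 γ a, ξ⟫| := by linarith
  have htaylor := abs_inner_taylor_remainder_one_le (ξ := ξ) hγ hM
  rw [hb] at htaylor
  rw [show (a - b) - ⟪deriv γ a, ξ⟫ / ⟪iteratedDeriv 2 γ a, ξ⟫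
      = (0 - ⟪deriv γ a, ξ⟫ - (b - a) * ⟪iteratedDeriv 2 γ a, ξ⟫) / ⟪iteratedDeriv 2 γ a, ξ⟫ by
    field_simp [abs_pos.1 hA0]; ring, abs_div, div_le_iff₀ hA0]
  calc _ ≤ M * ‖ξ‖ * (b - a) ^ 2 := htaylor
    _ = 2 * M * (a - b) ^ 2 * (‖ξ‖ / 2) := by ring
    _ ≤ 2 * M * (a - b) ^ 2 * |⟪iteratedDeriv 2 γ a, ξ⟫| := by
      have hM0 : 0 ≤ M := (norm_nonneg _).trans (hM a Set.left_mem_uIcc)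
      gcongr

theorem abs_inner_sub_half_sq_div_sub_inner_le (hγ : ContDiff ℝ 3 γ)
    (hM : ∀ t ∈ Set.uIcc a b, ‖iteratedDeriv 3 γ t‖ ≤ M) (hMab : M * |b - a| ≤ 1) (hξ : ξ ≠ 0)
    (hA : ‖ξ‖ / 2 ≤ |⟪iteratedDeriv 2 γ a, ξ⟫|) (hb : ⟪deriv γ b, ξ⟫ = 0) :
    |(⟪γ a, ξ⟫ - 1 / 2 * ⟪deriv γ a, ξ⟫ ^ 2 / ⟪iteratedDeriv 2 γ a, ξ⟫) - ⟪γ b, ξ⟫|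
      ≤ 2 * M * |b - a| ^ 3 * ‖ξ‖ := by
  have hB := abs_inner_taylor_remainder_one_le (ξ := ξ) hγ hM
  rw [hb, zero_sub, ← neg_add', abs_neg] at hB
  calc _ ≤ 2 * M * ‖ξ‖ * |b - a| ^ 3 :=
        abs_sub_half_sq_div_sub_le (norm_pos_iff.2 hξ) hA
          ((norm_nonneg _).trans (hM a Set.left_mem_uIcc)) hMab hB
          (abs_inner_taylor_remainder_two_le hγ hM)
    _ = 2 * M * |b - a| ^ 3 * ‖ξ‖ := by ring

end Curve

theorem FSClass.mem_and_abs_inner_deriv_le {n k : ℕ} {γ : ℝ → E n} {Ω : Set (E n)} {r s₀ : ℝ}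
    {a : ℝ → ℝ → E n × ℝ → ℂ} (ha : FSClass γ Ω k r s₀ a) {s t : ℝ} {Ξ : E n × ℝ}
    (hΞ : a s t Ξ ≠ 0) :
    Ξ.1 ∈ Ω ∧ |⟪deriv γ s₀, Ξ.1⟫| ≤ 16 * r * ‖Ξ.1‖ := by
  obtain ⟨-, -, hΩ, hlow, -⟩ := ha.1 s t Ξ hΞ
  have hS := (ha.2 0 0 zero_le_one zero_le_one s t).1 Ξ (by simpa using hΞ)
  have hdyadic : (2 : ℝ) ^ ((k : ℝ) + 3) = 16 * 2 ^ ((k : ℝ) - 1) := by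
    rw [show (k : ℝ) + 3 = 4 + ((k : ℝ) - 1) by ring, Real.rpow_add two_pos]
    norm_num
  have hr : 0 ≤ r := nonneg_of_mul_nonneg_right ((abs_nonneg _).trans hS.2.2.1) (by positivity)
  refine ⟨hΩ, hS.2.2.1.trans ?_⟩
  rw [hdyadic]
  linarith [mul_le_mul_of_nonneg_right hlow hr]

theorem statement16_general (d : ℕ) (M δ : ℝ) (hM : 10 ≤ M)
    (γ : ℝ → E d) (hγ : ContDiff ℝ (3 : ℕ) γ)
    (hM23 : ∀ s ∈ Set.Icc (-(2*δ)) (2*δ), ‖iteratedDeriv 2 γ s‖ + ‖iteratedDeriv 3 γ s‖ ≤ M)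
    (Ω : Set (E d)) (hΩ0 : (0 : E d) ∉ Ω)
    (hnd : ∀ ξ ∈ Ω, ∀ s ∈ Set.Icc (-δ) δ,
      ‖ξ‖ / 2 ≤ |⟪iteratedDeriv 2 γ s, ξ⟫| ∧ |⟪iteratedDeriv 2 γ s, ξ⟫| ≤ 2 * ‖ξ‖)
    (scr : E d → ℝ)
    (hscr : ∀ ξ ∈ Ω, scr ξ ∈ Set.Ioo (-δ) δ ∧ ⟪deriv γ (scr ξ), ξ⟫ = 0) :
    (∀ s : ℝ, |s| ≤ 3 * δ / 4 → ∀ ξ ∈ Ω,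
      |(s - scr ξ) - ⟪deriv γ s, ξ⟫ / ⟪iteratedDeriv 2 γ s, ξ⟫|
        ≤ 6 * M * (s - scr ξ) ^ 2) ∧
    (∀ sμ : ℝ, sμ ∈ Set.Icc (-δ) δ → ∀ (k : ℕ) (r₀ : ℝ),
      (2:ℝ) ^ (-(k:ℝ)/2) < r₀ → r₀ ≤ (1000:ℝ)⁻¹ * (M ^ 2)⁻¹ → r₀ ≤ δ / 4 →
      ∀ aμ : ℝ → ℝ → E d × ℝ → ℂ, FSClass γ Ω k r₀ sμ aμ →
      ∀ Ξ : E d × ℝ, (∃ s t, aμ s t Ξ ≠ 0) →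
        |(Ξ.2 + ⟪γ sμ, Ξ.1⟫ -
            (1/2) * ⟪deriv γ sμ, Ξ.1⟫ ^ 2 / ⟪iteratedDeriv 2 γ sμ, Ξ.1⟫) -
          (Ξ.2 + ⟪γ (scr Ξ.1), Ξ.1⟫)|
          ≤ 13 * M * |scr Ξ.1 - sμ| ^ 3 * ‖Ξ.1‖) := by
  have hγ''' : ∀ t ∈ Set.Icc (-δ) δ, ‖iteratedDeriv 3 γ t‖ ≤ M := fun t ht =>
    (le_add_of_nonneg_left (norm_nonneg _)).trans
      (hM23 t ⟨by linarith [ht.1, ht.2], by linarith [ht.1, ht.2]⟩)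
  have hne : ∀ ξ ∈ Ω, ξ ≠ 0 := fun ξ hξ h => hΩ0 (h ▸ hξ)
  have hscr_mem : ∀ ξ ∈ Ω, scr ξ ∈ Set.Icc (-δ) δ := fun ξ hξ =>
    Set.Ioo_subset_Icc_self (hscr ξ hξ).1
  refine ⟨fun s hs ξ hξ => ?_, fun sμ hsμ k r₀ _ hr₀M _ aμ haμ Ξ ⟨s, t, hΞ⟩ => ?_⟩
  · have hs' : s ∈ Set.Icc (-δ) δ := by
      constructor <;> linarith [abs_le.1 hs, abs_nonneg s]
    calc _ ≤ 2 * M * (s - scr ξ) ^ 2 := abs_sub_sub_inner_div_inner_le hγ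
          (fun t ht => hγ''' t (Set.uIcc_subset_Icc hs' (hscr_mem ξ hξ) ht)) (hne ξ hξ)
          (hnd ξ hξ s hs').1 (hscr ξ hξ).2
      _ ≤ 6 * M * (s - scr ξ) ^ 2 := by gcongr; linarith
  · obtain ⟨hΩ, hB⟩ := haμ.mem_and_abs_inner_deriv_le hΞ
    set ξ := Ξ.1
    have hsub := Set.uIcc_subset_Icc hsμ (hscr_mem ξ hΩ)
    have hdist : ‖ξ‖ / 2 * |scr ξ - sμ| ≤ |⟪deriv γ sμ, ξ⟫| :=
      mul_abs_sub_le_abs_inner_deriv (hγ.of_le (by norm_num))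
        (fun t ht => (hnd ξ hΩ t (hsub ht)).1) (hscr ξ hΩ).2
    have hclose : |scr ξ - sμ| ≤ 32 * r₀ := by
      have hξ := norm_pos_iff.2 (hne ξ hΩ)
      nlinarith [hdist.trans hB]
    have hM2r₀ : M ^ 2 * r₀ ≤ 1 / 1000 := calc
      M ^ 2 * r₀ ≤ M ^ 2 * ((1000 : ℝ)⁻¹ * (M ^ 2)⁻¹) := by gcongr
      _ = 1 / 1000 := by field_simp
    have hMh : M * |scr ξ - sμ| ≤ 1 := by
      nlinarith [(abs_nonneg _).trans hclose]
    calc _ = |(⟪γ sμ, ξ⟫ - 1 / 2 * ⟪deriv γ sμ, ξ⟫ ^ 2 / ⟪iteratedDeriv 2 γ sμ, ξ⟫)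
          - ⟪γ (scr ξ), ξ⟫| := by congr 1; ring
      _ ≤ 2 * M * |scr ξ - sμ| ^ 3 * ‖ξ‖ := abs_inner_sub_half_sq_div_sub_inner_le hγ
          (fun t ht => hγ''' t (hsub ht)) hMh (hne ξ hΩ) (hnd ξ hΩ sμ hsμ).1 (hscr ξ hΩ).2
      _ ≤ 13 * M * |scr ξ - sμ| ^ 3 * ‖ξ‖ := by gcongr; linarith

/-- Lemma 4.4. In the normalized setting, for `|s| ≤ 3δ/4` and `ξ ∈ Ω`:
`s - s_cr(ξ) = ⟨γ'(s),ξ⟩/⟨γ''(s),ξ⟩ + O₁(6M (s - s_cr(ξ))²)`; moreover if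
`s^μ ∈ [-δ,δ]`, `a^μ ∈ 𝔖_k(r₀, s^μ)` with `r₀ ≤ min{10⁻³M⁻², δ/4}` and `(ξ,τ) ∈ supp a^μ`,
then `U_μ(ξ,τ) = τ + ⟨γ(s_cr(ξ)),ξ⟩ + O₁(13M |s_cr(ξ) - s^μ|³ |ξ|)`, where
`U_μ(ξ,τ) = τ + ⟨γ(s^μ),ξ⟩ - ⟨γ'(s^μ),ξ⟩²/(2⟨γ''(s^μ),ξ⟩)`. -/
theorem statement16 (d : ℕ) (hd : 3 ≤ d) (M δ : ℝ) (hM : 10 ≤ M) (hδ : 0 < δ)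
    (h2δ : 2 * δ ≤ 1)
    (γ : ℝ → E d) (hγ : ContDiff ℝ (3 : ℕ) γ)
    (harc : ∀ s ∈ Set.Icc (-(2*δ)) (2*δ), ‖deriv γ s‖ = 1)
    (hM23 : ∀ s ∈ Set.Icc (-(2*δ)) (2*δ), ‖iteratedDeriv 2 γ s‖ + ‖iteratedDeriv 3 γ s‖ ≤ M)
    (Ω : Set (E d)) (hΩopen : IsOpen Ω) (hΩconv : Convex ℝ Ω) (hΩ0 : (0 : E d) ∉ Ω)
    (hΩcone : ∀ c : ℝ, 0 < c → ∀ ξ ∈ Ω, c • ξ ∈ Ω)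
    (hnd : ∀ ξ ∈ Ω, ∀ s ∈ Set.Icc (-δ) δ,
      ‖ξ‖ / 2 ≤ |⟪iteratedDeriv 2 γ s, ξ⟫| ∧ |⟪iteratedDeriv 2 γ s, ξ⟫| ≤ 2 * ‖ξ‖)
    (hsmall : ∀ ξ ∈ Ω, ∃ s ∈ Set.Icc (-(3*δ/4)) (3*δ/4), |⟪deriv γ s, ξ⟫| ≤ δ * ‖ξ‖ / 10)
    (scr : E d → ℝ)
    (hscr : ∀ ξ ∈ Ω, scr ξ ∈ Set.Ioo (-δ) δ ∧ ⟪deriv γ (scr ξ), ξ⟫ = 0) :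
    (∀ s : ℝ, |s| ≤ 3 * δ / 4 → ∀ ξ ∈ Ω,
      |(s - scr ξ) - ⟪deriv γ s, ξ⟫ / ⟪iteratedDeriv 2 γ s, ξ⟫|
        ≤ 6 * M * (s - scr ξ) ^ 2) ∧
    (∀ sμ : ℝ, sμ ∈ Set.Icc (-δ) δ → ∀ (k : ℕ) (r₀ : ℝ),
      (2:ℝ) ^ (-(k:ℝ)/2) < r₀ → r₀ ≤ (1000:ℝ)⁻¹ * (M ^ 2)⁻¹ → r₀ ≤ δ / 4 →
      ∀ aμ : ℝ → ℝ → E d × ℝ → ℂ, FSClass γ Ω k r₀ sμ aμ →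
      ∀ Ξ : E d × ℝ, (∃ s t, aμ s t Ξ ≠ 0) →
        |(Ξ.2 + ⟪γ sμ, Ξ.1⟫ -
            (1/2) * ⟪deriv γ sμ, Ξ.1⟫ ^ 2 / ⟪iteratedDeriv 2 γ sμ, Ξ.1⟫) -
          (Ξ.2 + ⟪γ (scr Ξ.1), Ξ.1⟫)|
          ≤ 13 * M * |scr Ξ.1 - sμ| ^ 3 * ‖Ξ.1‖) :=
  statement16_general d M δ hM γ hγ hM23 Ω hΩ0 hnd scr hscr
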